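/- Let u(x,y) = |x| − |y| on R². Then on the uniform grid hZ², u is an exact solution of the standard (narrow-stencil) centered finite difference discretization of the infinity Laplacian at every grid point away from the boundary: the centered-difference approximations of u_x u_x u_{xx} + 2 u_x u_y u_{xy} + u_y u_y u_{yy} (with symmetric four-point u_{xy} stencil) vanish identically at every grid point. -/
import Mathlib

lemma key5 (h : ℝ) (hh : 0 < h) (m : ℤ) :
    (|(m:ℝ) * h + h| - |(m:ℝ) * h - h|) ^ 2 *
      (|(m:ℝ) * h + h| - 2 * |(m:ℝ) * h| + |(m:ℝ) * h - h|) = 0 := by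
  rcases lt_trichotomy m 0 with hm | hm | hm
  · have h0 : m ≤ -1 := by omega
    have h1 : (m:ℝ) ≤ -1 := by exact_mod_cast h0
    rw [abs_of_nonpos (by nlinarith), abs_of_nonpos (by nlinarith),
      abs_of_nonpos (by nlinarith)]
    ring
  · subst hm
    simp only [Int.cast_zero, zero_mul, zero_add, zero_sub, abs_neg]
    ring
  · have h0 : 1 ≤ m := by omega
    have h1 : (1:ℝ) ≤ (m:ℝ) := by exact_mod_cast h0
    rw [abs_of_nonneg (by nlinarith), abs_of_nonneg (by nlinarith),
      abs_of_nonneg (by nlinarith)]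
    ring

/-- `u(x,y) = |x| − |y|` is an exact solution of the standard
centered finite difference discretization of the infinity Laplacian at every
point of the grid `hℤ²`: the centered-difference approximation of
`u_x u_x u_{xx} + 2 u_x u_y u_{xy} + u_y u_y u_{yy}` vanishes identically. -/
theorem stmt5 (h : ℝ) (hh : 0 < h) (m n : ℤ) :
    (fun (u : ℝ → ℝ → ℝ) (x y : ℝ) =>
      (fun Dx Dy Dxx Dyy Dxy =>
        Dx * Dx * Dxx + 2 * Dx * Dy * Dxy + Dy * Dy * Dyy = 0)
      ((u (x + h) y - u (x - h) y) / (2 * h))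
      ((u x (y + h) - u x (y - h)) / (2 * h))
      ((u (x + h) y - 2 * u x y + u (x - h) y) / h ^ 2)
      ((u x (y + h) - 2 * u x y + u x (y - h)) / h ^ 2)
      ((u (x + h) (y + h) + u (x - h) (y - h) - u (x - h) (y + h) - u (x + h) (y - h))
        / (4 * h ^ 2)))
    (fun x y => |x| - |y|) (m * h) (n * h) := by
  have hx := key5 h hh m
  have hy := key5 h hh n
  simp only
  linear_combination (1 / (4 * h ^ 4)) * hx - (1 / (4 * h ^ 4)) * hy
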